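/- Let θ ∈ ℝ be such that θ is not an integer multiple of π/2 (equivalently, cos θ ∉ {0, 1, −1}), and let w₃, w₄ be nonzero complex numbers with w₃² = cos θ and w₄² = −cos θ. Then trace(C₃(θ)) = (1 + cos θ)/w₃ and trace(C₄(θ)) = w₄·(cos θ − 1)/cos θ, and at least one of trace(C₃(θ)), trace(C₄(θ)) is not a real number. In particular, every subgroup of SL(2,ℂ) containing both C₃(θ) and C₄(θ) contains a strictly loxodromic element (an element whose trace is not real). -/
import Mathlib


/-!
STATEMENT 18: Let θ ∈ ℝ not be an integer multiple of π/2 and let w₃, w₄ be nonzero with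
w₃² = cos θ and w₄² = −cos θ. Then `tr(C₃(θ)) = (1 + cos θ)/w₃`,
`tr(C₄(θ)) = w₄·(cos θ − 1)/cos θ`, and at least one of these traces is not real.
In particular, every subgroup of SL(2,ℂ) containing both C₃(θ) and C₄(θ) contains a
strictly loxodromic element (an element whose trace is not real).
-/

noncomputable section

open Matrix Complex

abbrev M2 := Matrix (Fin 2) (Fin 2) ℂ
abbrev SL2C := Matrix.SpecialLinearGroup (Fin 2) ℂ

/-- The unnormalized action `Â₃(θ)`, with determinant `cos θ`. -/
def A3 (θ : ℝ) : M2 :=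
  !![(((Real.cos (2 * θ) + 3) / 4 : ℝ) : ℂ),
     Complex.I * ((Real.sin (θ / 2) ^ 2 * Real.sin θ : ℝ) : ℂ);
     -Complex.I * ((Real.sin (θ / 2) ^ 2 * Real.sin θ : ℝ) : ℂ),
     (((Real.sin θ ^ 2 + 2 * Real.cos θ) / 2 : ℝ) : ℂ)]

/-- The normalized action `C₃(θ) = w₃⁻¹ · Â₃(θ)`. -/
def C3 (θ : ℝ) (w₃ : ℂ) : M2 := w₃⁻¹ • A3 θ

/-- The normalized action `C₄(θ)`. -/
def C4 (θ : ℝ) (w₄ : ℂ) : M2 := (w₄ / 2) •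
  !![-(((Real.cos (2 * θ) + 3) : ℝ) : ℂ) / (2 * (Real.cos θ : ℂ)),
     Complex.I * ((Real.sin θ + Real.tan θ : ℝ) : ℂ);
     -Complex.I * ((Real.sin θ + Real.tan θ : ℝ) : ℂ),
     (((4 * Real.cos θ + Real.cos (2 * θ) - 1) : ℝ) : ℂ) / (2 * (Real.cos θ : ℂ))]

/-- A complex number whose square is a negative real is purely imaginary. -/
lemma pure_imag_of_sq_neg {z : ℂ} {r : ℝ} (hr : 0 < r) (h : z ^ 2 = -(r : ℂ)) :
    z.re = 0 ∧ z.im ≠ 0 := by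
  have h1 : (z ^ 2).im = 0 := by rw [h]; simp
  have h2 : (z ^ 2).re = -r := by rw [h]; simp
  rw [sq] at h1 h2
  rw [Complex.mul_im] at h1
  rw [Complex.mul_re] at h2
  have him : z.im ≠ 0 := by
    intro h0
    rw [h0] at h2
    nlinarith [sq_nonneg z.re]
  refine ⟨?_, him⟩
  have : z.re * z.im = 0 := by linarith
  rcases mul_eq_zero.mp this with h' | h'
  · exact h'
  · exact absurd h' him

lemma not_real_of_im_ne {z : ℂ} (h : z.im ≠ 0) : z ∉ Set.range ((↑) : ℝ → ℂ) := by
  rintro ⟨r, rfl⟩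
  simp at h

theorem stmt18 (θ : ℝ) (hθ : ¬ ∃ k : ℤ, θ = k * (Real.pi / 2))
    (w₃ w₄ : ℂ) (hw₃ : w₃ ≠ 0) (h3 : w₃ ^ 2 = (Real.cos θ : ℂ))
    (hw₄ : w₄ ≠ 0) (h4 : w₄ ^ 2 = -(Real.cos θ : ℂ))  :
    (C3 θ w₃).trace = (1 + (Real.cos θ : ℂ)) / w₃ ∧
      (C4 θ w₄).trace = w₄ * ((Real.cos θ : ℂ) - 1) / (Real.cos θ : ℂ) ∧
      ((C3 θ w₃).trace ∉ Set.range ((↑) : ℝ → ℂ) ∨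
        (C4 θ w₄).trace ∉ Set.range ((↑) : ℝ → ℂ)) ∧
      ∀ (H : Subgroup SL2C) (hc3 : (C3 θ w₃).det = 1) (hc4 : (C4 θ w₄).det = 1),
        (⟨C3 θ w₃, hc3⟩ : SL2C) ∈ H → (⟨C4 θ w₄, hc4⟩ : SL2C) ∈ H →
        ∃ g ∈ H, Matrix.trace (g : M2) ∉ Set.range ((↑) : ℝ → ℂ) := by
  -- basic facts about cos θ
  have hc0 : Real.cos θ ≠ 0 := by
    intro h
    rcases Real.cos_eq_zero_iff.mp h with ⟨n, hn⟩
    exact hθ ⟨2 * n + 1, by rw [hn]; push_cast; ring⟩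
  have hs0 : Real.sin θ ≠ 0 := by
    intro h
    rcases Real.sin_eq_zero_iff.mp h with ⟨n, hn⟩
    exact hθ ⟨2 * n, by rw [← hn]; push_cast; ring⟩
  have hpyth := Real.sin_sq_add_cos_sq θ
  have hc1 : Real.cos θ ≠ 1 := by
    intro h
    apply hs0
    have h2 : Real.sin θ ^ 2 = 0 := by nlinarith
    exact pow_eq_zero_iff (by norm_num) |>.mp h2
  have hcm1 : Real.cos θ ≠ -1 := by
    intro h
    apply hs0
    have h2 : Real.sin θ ^ 2 = 0 := by nlinarith
    exact pow_eq_zero_iff (by norm_num) |>.mp h2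
  have hcC : (Real.cos θ : ℂ) ≠ 0 := Complex.ofReal_ne_zero.mpr hc0
  have hcos2 : Real.cos (2 * θ) = 2 * Real.cos θ ^ 2 - 1 := Real.cos_two_mul θ
  -- trace of C3
  have t3 : (C3 θ w₃).trace = (1 + (Real.cos θ : ℂ)) / w₃ := by
    simp only [C3, Matrix.trace_smul, A3, Matrix.trace_fin_two_of, hcos2, smul_eq_mul]
    have hsin : Real.sin θ ^ 2 = 1 - Real.cos θ ^ 2 := Real.sin_sq θ
    rw [hsin]
    push_cast
    field_simp
    ring
  -- trace of C4
  have t4 : (C4 θ w₄).trace = w₄ * ((Real.cos θ : ℂ) - 1) / (Real.cos θ : ℂ) := by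
    simp only [C4, Matrix.trace_smul, Matrix.trace_fin_two_of, hcos2, smul_eq_mul]
    push_cast
    field_simp
    ring
  -- at least one trace is not real
  have hor : (C3 θ w₃).trace ∉ Set.range ((↑) : ℝ → ℂ) ∨
      (C4 θ w₄).trace ∉ Set.range ((↑) : ℝ → ℂ) := by
    rcases lt_or_gt_of_ne hc0 with hneg | hpos
    · -- cos θ < 0 : w₃ purely imaginary, trace C3 not real
      left
      obtain ⟨hre, him⟩ := pure_imag_of_sq_neg (r := -Real.cos θ) (by linarith)
        (by rw [h3]; push_cast; ring)
      rw [t3]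
      apply not_real_of_im_ne
      have hns : Complex.normSq w₃ ≠ 0 := ne_of_gt (Complex.normSq_pos.mpr hw₃)
      have h1c : 1 + Real.cos θ ≠ 0 := fun h => hcm1 (by linarith)
      have him2 : ((1 + (Real.cos θ : ℂ)) / w₃).im
          = -((1 + Real.cos θ) * w₃.im / Complex.normSq w₃) := by
        rw [Complex.div_im]
        simp only [Complex.add_im, Complex.one_im, Complex.ofReal_im, Complex.add_re,
          Complex.one_re, Complex.ofReal_re, hre, add_zero, zero_add, mul_zero, zero_mul,
          zero_div, zero_sub]
      rw [him2, neg_ne_zero]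
      exact div_ne_zero (mul_ne_zero h1c him) hns
    · -- cos θ > 0 : w₄ purely imaginary, trace C4 not real
      right
      obtain ⟨hre, him⟩ := pure_imag_of_sq_neg (r := Real.cos θ) hpos h4
      rw [t4]
      apply not_real_of_im_ne
      have heq : w₄ * ((Real.cos θ : ℂ) - 1) / (Real.cos θ : ℂ)
          = w₄ * (((Real.cos θ - 1) / Real.cos θ : ℝ) : ℂ) := by
        push_cast
        field_simp
      have hne : (Real.cos θ - 1) / Real.cos θ ≠ 0 :=
        div_ne_zero (fun h => hc1 (by linarith)) hc0
      have him2 : (w₄ * (((Real.cos θ - 1) / Real.cos θ : ℝ) : ℂ)).im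
          = w₄.im * ((Real.cos θ - 1) / Real.cos θ) := by
        rw [Complex.mul_im, Complex.ofReal_im, Complex.ofReal_re, mul_zero, zero_add]
      rw [heq, him2]
      exact mul_ne_zero him hne
  refine ⟨t3, t4, hor, ?_⟩
  intro H hc3 hc4 hm3 hm4
  rcases hor with h | h
  · exact ⟨⟨C3 θ w₃, hc3⟩, hm3, h⟩
  · exact ⟨⟨C4 θ w₄, hc4⟩, hm4, h⟩
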